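/- arXiv:0704.0197 — 2 statements merged into one kernel-verified Lean document; each statement's English description precedes it below -/
import Mathlib

section
/- Let K ≥ 1 and let p ∈ [0,1] be such that p·2^K is an integer. Let F^fixed_{K,p} be the uniform distribution on the set of Boolean functions f : 𝔽₂^K → 𝔽₂ whose truth table has Hamming weight exactly p·2^K. Then the expected value of the average sensitivity satisfies E_{F^fixed_{K,p}}[s(f)] = 2^(K+1)·K·p·(1−p) / (2^K − 1). -/
open Finset

/-- Boolean vectors of length `K`, modelling `𝔽₂^K`. -/
abbrev BVec (K : ℕ) := Fin K → Bool

/-- Flip the `i`-th coordinate of `w`, i.e. `w ⊕ eᵢ`. -/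
def flipCoord {K : ℕ} (w : BVec K) (i : Fin K) : BVec K :=
  Function.update w i (!(w i))

/-- The sensitivity `s_f(w)`: the number of coordinates `i` with `f(w) ≠ f(w ⊕ eᵢ)`. -/
def sens {K : ℕ} (f : BVec K → Bool) (w : BVec K) : ℕ :=
  (univ.filter (fun i : Fin K => f w ≠ f (flipCoord w i))).card

/-- The average sensitivity `s(f) = 2⁻ᴷ Σ_w s_f(w)`. -/
noncomputable def avgSens {K : ℕ} (f : BVec K → Bool) : ℝ :=
  (2 ^ K : ℝ)⁻¹ * ∑ w : BVec K, (sens f w : ℝ)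

/-- The Hamming weight of the truth table of `f`. -/
def wt {K : ℕ} (f : BVec K → Bool) : ℕ :=
  (univ.filter (fun w : BVec K => f w = true)).card

/-- Hamming weight of a Boolean vector. -/
def hw {K : ℕ} (w : BVec K) : ℕ :=
  (univ.filter (fun i : Fin K => w i = true)).card

/-- Interpret a Boolean value as a real number. -/
def b2r (b : Bool) : ℝ := if b then 1 else 0

/-- Bernoulli(`p`) product weight of a Boolean function: each of the `2^K` truth-table
entries is independently `1` with probability `p`. -/
noncomputable def bernP {K : ℕ} (p : ℝ) (f : BVec K → Bool) : ℝ :=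
  p ^ wt f * (1 - p) ^ (2 ^ K - wt f)

/-- `s^(l)(f,w)`: number of `x` with Hamming weight `l` such that `f(w) ≠ f(w ⊕ x)`. -/
def sensOrd {K : ℕ} (f : BVec K → Bool) (l : ℕ) (w : BVec K) : ℕ :=
  (univ.filter (fun x : BVec K => hw x = l ∧ f w ≠ f (fun i => xor (w i) (x i)))).card

/-- Average sensitivity of order `l`. -/
noncomputable def avgSensOrd {K : ℕ} (f : BVec K → Bool) (l : ℕ) : ℝ :=
  (2 ^ K : ℝ)⁻¹ * ∑ w : BVec K, (sensOrd f l w : ℝ)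

/-!
Write `n = 2^K` and let `S` be the set of functions of weight `t`. Permutations of `𝔽₂^K`
preserve the weight and act 2-transitively, so the number `c` of `f ∈ S` with `f a ≠ f b` is the
same for all pairs `a ≠ b`. Double counting the triples `(f, a, b)` with `f a ≠ f b` gives
`c · n(n - 1) = |S| · 2t(n - t)`. Summing the sensitivity over `S` swaps into a sum over the
`n·K` pairs `(w, w ⊕ eᵢ)`, so `Σ_{f ∈ S} s(f) = K c`, and dividing by `|S|` with `t = pn`
gives the formula.
-/

namespace BoolFun

variable {α : Type*} [Fintype α]

def weight (f : α → Bool) : ℕ := #{x | f x = true}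

def fixedWeight (α : Type*) [Fintype α] [DecidableEq α] (t : ℕ) : Finset (α → Bool) :=
  {f | weight f = t}

lemma weight_comp_perm (f : α → Bool) (σ : Equiv.Perm α) : weight (f ∘ σ) = weight f :=
  card_equiv σ (by simp)

lemma card_false_eq_card_sub_weight (f : α → Bool) :
    #{x | f x = false} = Fintype.card α - weight f := by
  have h := card_filter_add_card_filter_not (s := univ) (p := fun x => f x = true)
  simp only [Bool.not_eq_true, card_univ] at h
  rw [weight]
  omega

lemma card_offDiag_filter_ne [DecidableEq α] (f : α → Bool) :
    (#{q ∈ (univ : Finset α).offDiag | f q.1 ≠ f q.2} : ℝ)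
      = 2 * weight f * (Fintype.card α - weight f) := by
  have hsplit : {q ∈ (univ : Finset α).offDiag | f q.1 ≠ f q.2}
      = ({x | f x = true} : Finset α) ×ˢ ({x | f x = false} : Finset α)
        ∪ ({x | f x = false} : Finset α) ×ˢ ({x | f x = true} : Finset α) := by
    ext ⟨x, y⟩
    cases hx : f x <;> cases hy : f y <;> simp [hx, hy] <;> rintro rfl <;> simp_all
  have hdisj : Disjoint (({x | f x = true} : Finset α) ×ˢ ({x | f x = false} : Finset α))
      (({x | f x = false} : Finset α) ×ˢ ({x | f x = true} : Finset α)) :=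
    disjoint_product.2 (.inl (disjoint_filter.2 fun x _ h => by simp [h]))
  rw [hsplit, card_union_of_disjoint hdisj, card_product, card_product,
    card_false_eq_card_sub_weight, weight, Nat.cast_add, Nat.cast_mul, Nat.cast_mul,
    Nat.cast_sub (card_le_univ _)]
  ring

variable [DecidableEq α]

lemma fixedWeight_nonempty {t : ℕ} (ht : t ≤ Fintype.card α) :
    (fixedWeight α t).Nonempty := by
  obtain ⟨s, -, hs⟩ := exists_subset_card_eq (s := (univ : Finset α)) (by simpa using ht)
  exact ⟨fun x => decide (x ∈ s), mem_filter.2 ⟨mem_univ _, by simpa [weight] using hs⟩⟩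

/-- Permutations of `α` act 2-transitively on `α` and preserve weights. -/
lemma card_fixedWeight_filter_ne_eq (t : ℕ) {a b a' b' : α} (hab : a ≠ b) (hab' : a' ≠ b') :
    #{f ∈ fixedWeight α t | f a ≠ f b} = #{f ∈ fixedWeight α t | f a' ≠ f b'} := by
  obtain ⟨σ, hσa, hσb⟩ :=
    MulAction.is_two_pretransitive_iff.mp (Equiv.Perm.isMultiplyPretransitive α 2) hab' hab
  rw [Equiv.Perm.smul_def] at hσa hσb
  refine card_equiv (σ.symm.arrowCongr (Equiv.refl Bool)) fun f => ?_
  have hf : σ.symm.arrowCongr (Equiv.refl Bool) f = f ∘ σ := rfl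
  simp [fixedWeight, hf, weight_comp_perm, hσa, hσb]

/-- Double counting the pairs `(f, (x, y))` with `f x ≠ f y`, where `f` has weight `t` and
`x ≠ y`: each `f` contributes `2t(n - t)` pairs and each `(x, y)` the same number of `f`. -/
lemma card_fixedWeight_filter_ne {a b : α} (t : ℕ) (hab : a ≠ b) :
    (#{f ∈ fixedWeight α t | f a ≠ f b} : ℝ)
      = #(fixedWeight α t) * (2 * t * (Fintype.card α - t))
        / (Fintype.card α * (Fintype.card α - 1)) := by
  set n := Fintype.card α
  have hn : (1 : ℝ) < n := by exact_mod_cast Fintype.one_lt_card_iff.2 ⟨a, b, hab⟩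
  have hcount := sum_card_bipartiteAbove_eq_sum_card_bipartiteBelow (s := fixedWeight α t)
    (t := (univ : Finset α).offDiag) (r := fun f q => f q.1 ≠ f q.2)
  have hpairs : ∀ f ∈ fixedWeight α t,
      (#((univ : Finset α).offDiag.bipartiteAbove (fun f q => f q.1 ≠ f q.2) f) : ℝ)
        = 2 * t * (n - t) := by
    intro f hf
    rw [bipartiteAbove, card_offDiag_filter_ne, (mem_filter.1 hf).2]
  have hfuns : ∀ q ∈ (univ : Finset α).offDiag,
      #((fixedWeight α t).bipartiteBelow (fun f q => f q.1 ≠ f q.2) q)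
        = #{f ∈ fixedWeight α t | f a ≠ f b} :=
    fun q hq => card_fixedWeight_filter_ne_eq t (mem_offDiag.1 hq).2.2 hab
  rw [sum_congr rfl hfuns, sum_const, smul_eq_mul, offDiag_card, card_univ] at hcount
  have hcountR := congrArg (Nat.cast : ℕ → ℝ) hcount
  rw [Nat.cast_sum, sum_congr rfl hpairs, sum_const, nsmul_eq_mul, Nat.cast_mul,
    Nat.cast_sub (Nat.le_mul_self n), Nat.cast_mul] at hcountR
  rw [eq_div_iff (by nlinarith)]
  linear_combination -hcountR

end BoolFun

open BoolFun

section BVec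

variable {K : ℕ}

lemma card_bVec : Fintype.card (BVec K) = 2 ^ K := by simp

lemma ne_flipCoord (w : BVec K) (i : Fin K) : w ≠ flipCoord w i := by
  intro h
  simpa [flipCoord] using congrFun h i

lemma sum_sens_fixedWeight (t : ℕ) (w : BVec K) :
    ∑ f ∈ fixedWeight (BVec K) t, (sens f w : ℝ)
      = K * (#(fixedWeight (BVec K) t) * (2 * t * (2 ^ K - t)) / (2 ^ K * (2 ^ K - 1))) := by
  have hswap : ∑ f ∈ fixedWeight (BVec K) t, sens f w
      = ∑ i, #{f ∈ fixedWeight (BVec K) t | f w ≠ f (flipCoord w i)} :=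
    sum_card_bipartiteAbove_eq_sum_card_bipartiteBelow
      (r := fun (f : BVec K → Bool) i => f w ≠ f (flipCoord w i))
  rw [← Nat.cast_sum, hswap, Nat.cast_sum]
  simp only [card_fixedWeight_filter_ne t (ne_flipCoord w _), card_bVec, sum_const, card_univ,
    Fintype.card_fin, nsmul_eq_mul]
  push_cast
  ring

lemma sum_avgSens_fixedWeight (t : ℕ) :
    ∑ f ∈ fixedWeight (BVec K) t, avgSens f
      = K * (#(fixedWeight (BVec K) t) * (2 * t * (2 ^ K - t)) / (2 ^ K * (2 ^ K - 1))) := by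
  simp only [avgSens, ← mul_sum]
  rw [sum_comm, sum_congr rfl fun w _ => sum_sens_fixedWeight t w, sum_const, card_univ,
    card_bVec, nsmul_eq_mul, Nat.cast_pow, Nat.cast_ofNat, inv_mul_cancel_left₀ (by positivity)]

end BVec

theorem expected_avgSens_fixedBias_general (K : ℕ) (p : ℝ)
    (hp1 : p ≤ 1) (t : ℕ) (ht : (t : ℝ) = p * 2 ^ K) :
    (∑ f ∈ univ.filter (fun f : BVec K → Bool => wt f = t), avgSens f)
      / ((univ.filter (fun f : BVec K → Bool => wt f = t)).card : ℝ)
      = 2 ^ (K + 1) * K * p * (1 - p) / ((2 : ℝ) ^ K - 1) := by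
  have ht_le : t ≤ Fintype.card (BVec K) := by
    rw [card_bVec]
    exact_mod_cast ht.trans_le (mul_le_of_le_one_left (by positivity) hp1)
  have hS : (#(fixedWeight (BVec K) t) : ℝ) ≠ 0 := by
    exact_mod_cast (fixedWeight_nonempty ht_le).card_pos.ne'
  -- `wt` is `weight` on `BVec K`
  change (∑ f ∈ fixedWeight (BVec K) t, avgSens f) / #(fixedWeight (BVec K) t) = _
  rw [sum_avgSens_fixedWeight, ht]
  field_simp
  ring

theorem expected_avgSens_fixedBias (K : ℕ) (hK : 1 ≤ K) (p : ℝ)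
    (hp0 : 0 ≤ p) (hp1 : p ≤ 1) (t : ℕ) (ht : (t : ℝ) = p * 2 ^ K) :
    (∑ f ∈ univ.filter (fun f : BVec K → Bool => wt f = t), avgSens f)
      / ((univ.filter (fun f : BVec K → Bool => wt f = t)).card : ℝ)
      = 2 ^ (K + 1) * K * p * (1 - p) / ((2 : ℝ) ^ K - 1) :=
  expected_avgSens_fixedBias_general K p hp1 t ht
end

section
/- Let K ≥ 1, let l ∈ {1, …, K}, let p ∈ [0,1] be such that p·2^K is an integer, and let F^fixed_{K,p} be the uniform distribution on the set of Boolean functions f : 𝔽₂^K → 𝔽₂ whose truth table has Hamming weight exactly p·2^K. Then the expected value of the average sensitivity of order l satisfies E_{F^fixed_{K,p}}[s^(l)(f)] = C(K,l) · 2^(K+1)·p·(1−p) / (2^K − 1), where C(K,l) is the binomial coefficient. -/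
open Finset

/-!
Permutations of `𝔽₂^K` preserve truth-table weight and act 2-transitively, so the number `c` of
weight-`t` functions with `f w ≠ f w'` is the same for all `w ≠ w'`. Counting triples
`(f, w, w')` with `f w ≠ f w'` in two ways (a weight-`t` function has `2t(2^K - t)` such ordered
pairs) gives `2^K (2^K - 1) c = 2t(2^K - t) N`, with `N` the number of weight-`t` functions.
On the other hand `Σ_f Σ_w s^(l)(f, w)` counts the triples with `w' = w ⊕ x`, `wH(x) = l`, i.e.
`2^K C(K,l) c`. Eliminating `c` and substituting `t = p 2^K` gives the formula.
-/

section FunctionsToBool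

variable {α : Type*} [Fintype α]

theorem card_filter_comp_perm (p : α → Prop) [DecidablePred p] (σ : Equiv.Perm α) :
    #{x | p (σ x)} = #{x | p x} :=
  card_equiv σ (by simp)

theorem exists_card_filter_eq_true {t : ℕ} (ht : t ≤ Fintype.card α) :
    ∃ f : α → Bool, #{x | f x = true} = t := by
  classical
  obtain ⟨s, -, hs⟩ := exists_subset_card_eq (s := (univ : Finset α)) (by simpa using ht)
  exact ⟨fun x => decide (x ∈ s), by simpa using hs⟩

theorem card_filter_apply_fst_ne_apply_snd {f : α → Bool} {t : ℕ} (hf : #{x | f x = true} = t) :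
    #{q : α × α | f q.1 ≠ f q.2} = 2 * t * (Fintype.card α - t) := by
  classical
  have hfalse : #{x | f x = false} = Fintype.card α - t := by
    have := card_filter_add_card_filter_not (s := univ) (fun x => f x = true)
    simp only [Bool.not_eq_true, card_univ] at this
    omega
  have hsplit : ({q : α × α | f q.1 ≠ f q.2} : Finset (α × α))
      = ({x | f x = true} : Finset α) ×ˢ ({x | f x = false} : Finset α)
        ∪ ({x | f x = false} : Finset α) ×ˢ ({x | f x = true} : Finset α) := by
    ext ⟨x, y⟩; cases hx : f x <;> cases hy : f y <;> simp [hx, hy]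
  rw [hsplit, card_union_of_disjoint, card_product, card_product, hf, hfalse]
  · ring
  · exact disjoint_product.2 (.inl (disjoint_filter.2 fun x _ h => by simp [h]))

variable [DecidableEq α]

theorem card_weight_apply_ne_eq_of_ne (t : ℕ) {a b c d : α} (hab : a ≠ b) (hcd : c ≠ d) :
    #{f : α → Bool | #{x | f x = true} = t ∧ f a ≠ f b}
      = #{f : α → Bool | #{x | f x = true} = t ∧ f c ≠ f d} := by
  obtain ⟨σ, hσa, hσb⟩ := (MulAction.is_two_pretransitive_iff.mp
    (Equiv.Perm.isMultiplyPretransitive α 2)) hab hcd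
  refine card_equiv (σ.arrowCongr (Equiv.refl Bool)) fun f => ?_
  simp [← hσa, ← hσb, card_filter_comp_perm (fun x => f x = true) σ.symm]

theorem card_mul_card_weight_apply_ne (t : ℕ) {a b : α} (hab : a ≠ b) :
    Fintype.card α * (Fintype.card α - 1) * #{f : α → Bool | #{x | f x = true} = t ∧ f a ≠ f b}
      = 2 * t * (Fintype.card α - t) * #{f : α → Bool | #{x | f x = true} = t} := by
  set W : Finset (α → Bool) := {f | #{x | f x = true} = t}
  have hcount := sum_card_bipartiteAbove_eq_sum_card_bipartiteBelow
    (fun (f : α → Bool) (q : α × α) => f q.1 ≠ f q.2) (s := W) (t := univ)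
  have hleft : ∀ f ∈ W, #(univ.bipartiteAbove (fun (f : α → Bool) (q : α × α) => f q.1 ≠ f q.2) f)
      = 2 * t * (Fintype.card α - t) := fun f hf => card_filter_apply_fst_ne_apply_snd (mem_filter.1 hf).2
  have hright : ∀ q ∈ (univ : Finset (α × α)),
      #(W.bipartiteBelow (fun (f : α → Bool) (q : α × α) => f q.1 ≠ f q.2) q)
        = if q ∈ (univ : Finset α).offDiag then
            #{f : α → Bool | #{x | f x = true} = t ∧ f a ≠ f b} else 0 := by
    rintro ⟨x, y⟩ -
    rw [bipartiteBelow, filter_filter]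
    split_ifs with hxy
    · exact card_weight_apply_ne_eq_of_ne t (mem_offDiag.1 hxy).2.2 hab
    · simp_all
  rw [sum_congr rfl hleft, sum_congr rfl hright, sum_const, ← sum_filter, sum_const,
    filter_mem_eq_inter, univ_inter, offDiag_card, card_univ] at hcount
  simp only [smul_eq_mul] at hcount
  rw [Nat.mul_sub_one, ← hcount, mul_comm]

end FunctionsToBool

theorem card_filter_card_filter_eq_true (ι : Type*) [Fintype ι] [DecidableEq ι] (l : ℕ) :
    #{x : ι → Bool | #{i | x i = true} = l} = (Fintype.card ι).choose l := by
  rw [← card_univ, ← card_powersetCard]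
  refine card_nbij' (fun x => ({i | x i = true} : Finset ι)) (fun s i => decide (i ∈ s)) ?_ ?_ ?_ ?_
  · exact fun x hx => by simpa using hx
  · exact fun s hs => by simpa using hs
  · exact fun x _ => funext fun i => by simp
  · exact fun s _ => ext fun i => by simp

theorem card_bvec (K : ℕ) : Fintype.card (BVec K) = 2 ^ K := by
  simp

theorem ne_xor_of_hw_pos {K : ℕ} {w x : BVec K} (hx : 0 < hw x) :
    w ≠ fun i => xor (w i) (x i) := by
  obtain ⟨i, hi⟩ := card_pos.1 hx
  intro h
  simpa [(mem_filter.1 hi).2] using congrFun h i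

theorem sum_sum_sensOrd {K l t : ℕ} (hl : 0 < l) {a b : BVec K} (hab : a ≠ b) :
    ∑ f ∈ univ.filter (fun f : BVec K → Bool => wt f = t), ∑ w, sensOrd f l w
      = 2 ^ K * K.choose l * #{f : BVec K → Bool | wt f = t ∧ f a ≠ f b} := by
  rw [sum_comm]
  have hsum_w : ∀ w : BVec K, ∑ f ∈ univ.filter (fun f : BVec K → Bool => wt f = t),
      sensOrd f l w = K.choose l * #{f : BVec K → Bool | wt f = t ∧ f a ≠ f b} := by
    intro w
    have hcount := sum_card_bipartiteAbove_eq_sum_card_bipartiteBelow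
      (fun f (x : BVec K) => f w ≠ f (fun i => xor (w i) (x i)))
      (s := univ.filter (fun f : BVec K → Bool => wt f = t)) (t := {x | hw x = l})
    have hpair : ∀ x ∈ ({x | hw x = l} : Finset (BVec K)),
        #((univ.filter (fun f : BVec K → Bool => wt f = t)).bipartiteBelow
          (fun f (x : BVec K) => f w ≠ f (fun i => xor (w i) (x i))) x)
          = #{f : BVec K → Bool | wt f = t ∧ f a ≠ f b} := by
      intro x hx
      rw [bipartiteBelow, filter_filter]
      exact card_weight_apply_ne_eq_of_ne t (ne_xor_of_hw_pos ((mem_filter.1 hx).2 ▸ hl)) hab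
    have hsphere : #{x : BVec K | hw x = l} = K.choose l :=
      (card_filter_card_filter_eq_true (Fin K) l).trans (by rw [Fintype.card_fin])
    rw [sum_congr rfl hpair, sum_const, smul_eq_mul, hsphere] at hcount
    simpa only [sensOrd, bipartiteAbove, filter_filter] using hcount
  rw [sum_congr rfl fun w _ => hsum_w w, sum_const, card_univ, card_bvec, smul_eq_mul, mul_assoc]

theorem sum_avgSensOrd {K l t : ℕ} (hl : 0 < l) {a b : BVec K} (hab : a ≠ b) :
    ∑ f ∈ univ.filter (fun f : BVec K → Bool => wt f = t), avgSensOrd f l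
      = K.choose l * #{f : BVec K → Bool | wt f = t ∧ f a ≠ f b} := by
  have hR := congrArg (Nat.cast : ℕ → ℝ) (sum_sum_sensOrd (t := t) hl hab)
  push_cast at hR
  simp only [avgSensOrd, ← mul_sum, hR]
  field_simp

theorem expected_avgSensOrd_fixedBias_general (K l : ℕ) (hK : 1 ≤ K) (hl1 : 1 ≤ l)
    (p : ℝ) (hp1 : p ≤ 1)
    (t : ℕ) (ht : (t : ℝ) = p * 2 ^ K) :
    (∑ f ∈ univ.filter (fun f : BVec K → Bool => wt f = t), avgSensOrd f l)
      / ((univ.filter (fun f : BVec K → Bool => wt f = t)).card : ℝ)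
      = (Nat.choose K l : ℝ) * 2 ^ (K + 1) * p * (1 - p) / ((2 : ℝ) ^ K - 1) := by
  have hn : (0 : ℝ) < 2 ^ K := by positivity
  have hn2 : (2 : ℝ) ≤ 2 ^ K := by simpa using pow_le_pow_right₀ one_le_two hK
  have htle : t ≤ 2 ^ K := by
    have : (t : ℝ) ≤ 2 ^ K := ht ▸ mul_le_of_le_one_left hn.le hp1
    exact_mod_cast this
  obtain ⟨f₀, hf₀⟩ := exists_card_filter_eq_true (htle.trans_eq (card_bvec K).symm)
  have hN : (0 : ℝ) < #{f : BVec K → Bool | wt f = t} := by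
    exact_mod_cast card_pos.2 ⟨f₀, mem_filter.2 ⟨mem_univ _, hf₀⟩⟩
  set a : BVec K := fun _ => false
  set b : BVec K := fun _ => true
  have hab : a ≠ b := fun h => by simpa [a, b] using congrFun h ⟨0, hK⟩
  have hpairs : ((2 : ℝ) ^ K - 1) * #{f : BVec K → Bool | wt f = t ∧ f a ≠ f b}
      = 2 * p * (1 - p) * 2 ^ K * #{f : BVec K → Bool | wt f = t} := by
    have h : 2 ^ K * (2 ^ K - 1) * #{f : BVec K → Bool | wt f = t ∧ f a ≠ f b}
        = 2 * t * (2 ^ K - t) * #{f : BVec K → Bool | wt f = t} := by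
      have := card_mul_card_weight_apply_ne t hab
      rwa [card_bvec] at this
    have hR := congrArg (Nat.cast : ℕ → ℝ) h
    push_cast [Nat.cast_sub htle, Nat.cast_sub Nat.one_le_two_pow, ht] at hR
    exact mul_left_cancel₀ hn.ne' (by linear_combination hR)
  rw [sum_avgSensOrd hl1 hab, div_eq_div_iff hN.ne' (by linarith), pow_succ]
  linear_combination (K.choose l : ℝ) * hpairs

theorem expected_avgSensOrd_fixedBias (K l : ℕ) (hK : 1 ≤ K) (hl1 : 1 ≤ l)
    (hlK : l ≤ K) (p : ℝ) (hp0 : 0 ≤ p) (hp1 : p ≤ 1)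
    (t : ℕ) (ht : (t : ℝ) = p * 2 ^ K) :
    (∑ f ∈ univ.filter (fun f : BVec K → Bool => wt f = t), avgSensOrd f l)
      / ((univ.filter (fun f : BVec K → Bool => wt f = t)).card : ℝ)
      = (Nat.choose K l : ℝ) * 2 ^ (K + 1) * p * (1 - p) / ((2 : ℝ) ^ K - 1) :=
  expected_avgSensOrd_fixedBias_general K l hK hl1 p hp1 t ht
end
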